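/- arXiv:1903.09236 — 4 statements merged into one kernel-verified Lean document; each statement's English description precedes it below -/
import Mathlib

section
/- Every k_ω topological group that is precompact is compact. -/
/-!
Suppose `G` is not compact. Since finitely many translates of compact sets never cover `G`, one can
choose points `x₀, x₁, …` such that `xₙ / xₘ ∉ K k ∪ {1}` whenever `m ≠ n` and `k < max m n`.
The set `D` of all quotients `xₙ / xₘ` with `m ≠ n` then meets every `K k` in a finite set, so it is
closed by the `k_ω` property, and it misses `1`. Hence some neighbourhood `V` of `1` has `V / V`
disjoint from `D`; but finitely many translates of `V` cover `G`, so two of the `xₙ` lie in the same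
translate, and their quotient lies in `V / V`.
-/

open Pointwise Topology

theorem isClosed_of_forall_inter_finite {X ι : Type*} [TopologicalSpace X] [T1Space X]
    (K : ι → Set X) (hK : ∀ U : Set X, (∀ i, ∃ V, IsOpen V ∧ U ∩ K i = V ∩ K i) → IsOpen U)
    {S : Set X} (hS : ∀ i, (S ∩ K i).Finite) : IsClosed S := by
  refine isOpen_compl_iff.mp (hK _ fun i => ⟨(S ∩ K i)ᶜ, (hS i).isClosed.isOpen_compl, ?_⟩)
  ext
  simp only [Set.mem_inter_iff, Set.mem_compl_iff]
  tauto

theorem exists_seq_of_forall_finite_exists {α : Type*} (r : ℕ → α → α → Prop)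
    (h : ∀ n (s : Set α), s.Finite → ∃ y, ∀ x ∈ s, r n x y) :
    ∃ f : ℕ → α, ∀ m n, m < n → r n (f m) (f n) := by
  choose g hg using h
  let init : ℕ → List α := fun n => Nat.rec [] (fun n l => g n {x | x ∈ l} l.finite_toSet :: l) n
  let f : ℕ → α := fun n => g n _ (init n).finite_toSet
  have mem_init : ∀ m n, m < n → f m ∈ init n := by
    intro m n hmn
    induction n with
    | zero => omega
    | succ n ih =>
      rcases Nat.lt_succ_iff_lt_or_eq.mp hmn with hlt | rfl
      · exact List.mem_cons_of_mem _ (ih hlt)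
      · exact List.mem_cons_self
  exact ⟨f, fun m n hmn => hg _ _ _ _ (mem_init m n hmn)⟩

section TopologicalGroup

variable {G : Type*} [Group G] [TopologicalSpace G] [IsTopologicalGroup G]

theorem exists_seq_div_notMem_of_noncompactSpace [NoncompactSpace G] (C : ℕ → Set G)
    (hC : ∀ k, IsCompact (C k)) :
    ∃ x : ℕ → G, ∀ m n k, m ≠ n → k < max m n → x n / x m ∉ C k := by
  obtain ⟨x, hx⟩ := exists_seq_of_forall_finite_exists
    (fun n a b => ∀ k < n, b / a ∉ C k ∪ (C k)⁻¹) fun n s hs => by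
      have hcpt : IsCompact (⋃ k ∈ Set.Iio n, (C k ∪ (C k)⁻¹) * s) :=
        (Set.finite_Iio n).isCompact_biUnion fun k _ =>
          ((hC k).union (hC k).inv).mul hs.isCompact
      obtain ⟨y, hy⟩ := (Set.ne_univ_iff_exists_notMem _).mp hcpt.ne_univ
      refine ⟨y, fun a ha k hk hya => hy ?_⟩
      exact Set.mem_biUnion hk (div_mul_cancel y a ▸ Set.mul_mem_mul hya ha)
  refine ⟨x, fun m n k hmn hk hxC => ?_⟩
  rcases hmn.lt_or_gt with hlt | hgt
  · exact hx m n hlt k (by omega) (Or.inl hxC)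
  · exact hx n m hgt k (by omega) (Or.inr (by rwa [Set.mem_inv, inv_div]))

theorem exists_ne_div_mem_of_totallyBounded {ι : Type*} [Infinite ι]
    (hpre : ∀ U : Set G, IsOpen U → U.Nonempty → ∃ F : Set G, F.Finite ∧ U * F = Set.univ)
    (x : ι → G) {U : Set G} (hU : U ∈ 𝓝 1) : ∃ m n, m ≠ n ∧ x n / x m ∈ U := by
  obtain ⟨V, hV, hVU⟩ := exists_nhds_split_inv hU
  obtain ⟨F, hF, hcover⟩ :=
    hpre (interior V) isOpen_interior ⟨1, mem_interior_iff_mem_nhds.mpr hV⟩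
  have hx : ∀ i, ∃ v ∈ interior V, ∃ f ∈ F, v * f = x i := fun i =>
    Set.mem_mul.mp (hcover ▸ Set.mem_univ (x i))
  choose v hv f hf hvf using hx
  obtain ⟨m, -, n, -, hmn, hfmn⟩ :=
    Set.infinite_univ.exists_ne_map_eq_of_mapsTo (fun i _ => hf i) hF
  refine ⟨m, n, hmn, ?_⟩
  rw [← hvf, ← hvf, hfmn, mul_div_mul_right_eq_div]
  exact hVU _ (interior_subset (hv n)) _ (interior_subset (hv m))

end TopologicalGroup

/-- A Hausdorff `k_ω` topological group that is precompact is compact. -/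
theorem stmt1 {G : Type*} [Group G] [TopologicalSpace G] [IsTopologicalGroup G] [T2Space G]
    (K : ℕ → Set G) (hKcpt : ∀ n, IsCompact (K n))
    (hdet : ∀ U : Set G, IsOpen U ↔ ∀ n, ∃ V : Set G, IsOpen V ∧ U ∩ K n = V ∩ K n)
    (hpre : ∀ U : Set G, IsOpen U → U.Nonempty →
      ∃ F : Set G, F.Finite ∧ U * F = Set.univ) :
    CompactSpace G := by
  by_contra hG
  have : NoncompactSpace G := not_compactSpace_iff.mp hG
  obtain ⟨x, hx⟩ :=
    exists_seq_div_notMem_of_noncompactSpace (fun k => insert 1 (K k)) fun k => (hKcpt k).insert 1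
  let D : Set G := {g | ∃ m n, m ≠ n ∧ x n / x m = g}
  have hD_inter : ∀ k, (D ∩ K k).Finite := by
    intro k
    refine (((Set.finite_Iic k).prod (Set.finite_Iic k)).image fun p => x p.2 / x p.1).subset ?_
    rintro _ ⟨⟨m, n, hmn, rfl⟩, hK⟩
    have hmax : max m n ≤ k := not_lt.mp fun hk => hx m n k hmn hk (Set.mem_insert_of_mem 1 hK)
    exact ⟨(m, n), ⟨le_of_max_le_left hmax, le_of_max_le_right hmax⟩, rfl⟩
  have hD_closed : IsClosed D := isClosed_of_forall_inter_finite K (fun U => (hdet U).mpr) hD_inter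
  have hD_one : (1 : G) ∉ D := by
    rintro ⟨m, n, hmn, h⟩
    exact hx m n 0 hmn (by omega) (h ▸ Set.mem_insert _ _)
  obtain ⟨m, n, hmn, hmem⟩ :=
    exists_ne_div_mem_of_totallyBounded hpre x (hD_closed.isOpen_compl.mem_nhds hD_one)
  exact hmem ⟨m, n, hmn, rfl⟩
end

section
/- An infinite countable Hausdorff topological group whose topology is determined by a countable family of compact subsets (k_ω) is not precompact. -/
/-!
A precompact `k_ω` group that is countable is compact: otherwise, enumerating the finite subsets
`F₀, F₁, …` of `G` and picking `gₘ ∉ (K₀ ∪ ⋯ ∪ Kₘ) * Fₘ`, the set `D = ⋃ₘ gₘ Fₘ⁻¹` meets every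
`Kₙ` in a finite set, so it is closed, while no `Fₘ` translates its complement onto `G` (and if
`D = G`, every `Kₙ` is finite and `G` is discrete).
A countable compact Hausdorff space is a countable union of closed singletons, so by Baire one of
them is open; but an infinite precompact group has no isolated points.
-/

open Pointwise Set

def IsPrecompactGroup (G : Type*) [Group G] [TopologicalSpace G] : Prop :=
  ∀ U : Set G, IsOpen U → U.Nonempty → ∃ F : Set G, F.Finite ∧ U * F = univ

theorem isClosed_of_forall_isClosed_inter {X : Type*} [TopologicalSpace X] {K : ℕ → Set X}
    (hdet : ∀ U : Set X, IsOpen U ↔ ∀ n, ∃ V : Set X, IsOpen V ∧ U ∩ K n = V ∩ K n)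
    {D : Set X} (hD : ∀ n, IsClosed (D ∩ K n)) : IsClosed D := by
  rw [← isOpen_compl_iff, hdet]
  refine fun n => ⟨(D ∩ K n)ᶜ, (hD n).isOpen_compl, ?_⟩
  rw [compl_inter, union_inter_distrib_right, compl_inter_self, union_empty]

theorem exists_isOpen_singleton_of_countable {X : Type*} [TopologicalSpace X] [BaireSpace X]
    [T1Space X] [Countable X] [Nonempty X] : ∃ x : X, IsOpen ({x} : Set X) := by
  obtain ⟨x, hx⟩ := nonempty_interior_of_iUnion_of_closed (fun x : X => isClosed_singleton)
    (iUnion_of_singleton X)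
  exact ⟨x, hx.subset_singleton_iff.1 interior_subset ▸ isOpen_interior⟩

section

variable {G : Type*} [Group G] [TopologicalSpace G]

theorem IsPrecompactGroup.not_isOpen_singleton [Infinite G] (hG : IsPrecompactGroup G) (g : G) :
    ¬IsOpen ({g} : Set G) := fun hg => by
  obtain ⟨F, hF, hgF⟩ := hG {g} hg (singleton_nonempty g)
  exact infinite_univ (hgF ▸ (finite_singleton g).mul hF)

theorem exists_forall_finite_inter_and_compl_mul_ne_univ [Countable G] [ContinuousMul G]
    [NoncompactSpace G] {K : ℕ → Set G} (hK : ∀ n, IsCompact (K n)) :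
    ∃ D : Set G, (∀ n, (D ∩ K n).Finite) ∧ ∀ F : Set G, F.Finite → Dᶜ * F ≠ univ := by
  obtain ⟨f, hf⟩ := exists_surjective_nat (Finset G)
  have hg : ∀ m, ∃ g, g ∉ accumulate K m * (f m : Set G) := fun m =>
    (ne_univ_iff_exists_notMem _).1
      ((isCompact_accumulate hK m).mul (f m).finite_toSet.isCompact).ne_univ
  choose g hg using hg
  have mem_iff : ∀ x m, x ∈ g m • ((f m : Set G))⁻¹ ↔ x⁻¹ * g m ∈ (f m : Set G) := by
    intro x m
    simp [mem_smul_set_iff_inv_smul_mem]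
  refine ⟨⋃ m, g m • ((f m : Set G))⁻¹, fun n => ?_, fun F hF hDF => ?_⟩
  · refine ((finite_lt_nat n).biUnion fun m _ =>
      (f m).finite_toSet.inv.smul_set (a := g m)).subset ?_
    rintro x ⟨hxD, hxK⟩
    obtain ⟨m, hm⟩ := mem_iUnion.1 hxD
    refine mem_biUnion (show m < n from not_le.1 fun hnm => hg m ?_) hm
    have := mul_mem_mul (monotone_accumulate hnm (subset_accumulate hxK)) ((mem_iff x m).1 hm)
    rwa [mul_inv_cancel_left] at this
  · obtain ⟨m, hm⟩ := hf hF.toFinset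
    obtain ⟨u, hu, y, hy, hgm⟩ := hDF ▸ mem_univ (g m)
    refine hu (mem_iUnion.2 ⟨m, (mem_iff u m).2 ?_⟩)
    rw [hm, hF.coe_toFinset, ← hgm, inv_mul_cancel_left]
    exact hy

theorem IsPrecompactGroup.compactSpace [Countable G] [Infinite G] [ContinuousMul G] [T1Space G]
    (hG : IsPrecompactGroup G) {K : ℕ → Set G} (hK : ∀ n, IsCompact (K n))
    (hdet : ∀ U : Set G, IsOpen U ↔ ∀ n, ∃ V : Set G, IsOpen V ∧ U ∩ K n = V ∩ K n) :
    CompactSpace G := by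
  by_contra hnc
  have : NoncompactSpace G := not_compactSpace_iff.1 hnc
  obtain ⟨D, hDK, hDF⟩ := exists_forall_finite_inter_and_compl_mul_ne_univ hK
  rcases (Dᶜ).eq_empty_or_nonempty with hD | hD
  · have hDuniv : D = univ := compl_empty_iff.1 hD
    refine hG.not_isOpen_singleton 1 (isClosed_compl_iff.1 ?_)
    exact isClosed_of_forall_isClosed_inter hdet fun n =>
      ((hDK n).subset (inter_subset_inter_left _ (hDuniv ▸ subset_univ _))).isClosed
  · have hDc : IsOpen Dᶜ :=
      (isClosed_of_forall_isClosed_inter hdet fun n => (hDK n).isClosed).isOpen_compl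
    obtain ⟨F, hF, hDF'⟩ := hG Dᶜ hDc hD
    exact hDF F hF hDF'

end

theorem stmt2_general {G : Type*} [Group G] [TopologicalSpace G] [IsTopologicalGroup G] [T2Space G]
    [Countable G] [Infinite G]
    (K : ℕ → Set G) (hKcpt : ∀ n, IsCompact (K n))
    (hdet : ∀ U : Set G, IsOpen U ↔ ∀ n, ∃ V : Set G, IsOpen V ∧ U ∩ K n = V ∩ K n) :
    ¬ (∀ U : Set G, IsOpen U → U.Nonempty →
      ∃ F : Set G, F.Finite ∧ U * F = Set.univ) := by
  intro (hG : IsPrecompactGroup G)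
  have : CompactSpace G := IsPrecompactGroup.compactSpace hG hKcpt hdet
  obtain ⟨x, hx⟩ := exists_isOpen_singleton_of_countable (X := G)
  exact hG.not_isOpen_singleton x hx

/-- A countably infinite Hausdorff `k_ω` topological group is not precompact. -/
theorem stmt2 {G : Type*} [Group G] [TopologicalSpace G] [IsTopologicalGroup G] [T2Space G]
    [Countable G] [Infinite G]
    (K : ℕ → Set G) (hKcpt : ∀ n, IsCompact (K n)) (hKcov : (⋃ n, K n) = Set.univ)
    (hdet : ∀ U : Set G, IsOpen U ↔ ∀ n, ∃ V : Set G, IsOpen V ∧ U ∩ K n = V ∩ K n) :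
    ¬ (∀ U : Set G, IsOpen U → U.Nonempty →
      ∃ F : Set G, F.Finite ∧ U * F = Set.univ) :=
  stmt2_general K hKcpt hdet
end

section
/- Every Fréchet–Urysohn topological group is an α₄ space: for every countable family (Sₙ) of sequences converging to a point x, there is a sequence S converging to x with S ∩ Sₙ ≠ ∅ for infinitely many n. -/
/-!
Nyikos's argument. Fix a sequence `t → 1` none of whose terms is inseparable from `1` and
translate the `n`-th sequence by `t n`. The points `t n * S n k` accumulate at `1`, so the
Fréchet–Urysohn property gives a sequence `t nⱼ * S nⱼ kⱼ → 1` among them. The `n`-th translate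
converges to `t n`, which is separated from `1`, so `nⱼ → ∞`; hence
`S nⱼ kⱼ = (t nⱼ)⁻¹ * (t nⱼ * S nⱼ kⱼ) → 1` meets infinitely many `S n`. If no such `t` exists,
infinitely many `S n` contain a point inseparable from `1`, and these points form the required
sequence.
-/

open Filter Topology Set

def MeetsInfinitelyMany {X : Type*} (u : ℕ → X) (S : ℕ → ℕ → X) : Prop :=
  {n : ℕ | (range u ∩ range (S n)).Nonempty}.Infinite

section R1

variable {X : Type*} [TopologicalSpace X] [R1Space X]

theorem Filter.Tendsto.eventually_not_inseparable {α : Type*} {l : Filter α} {c : α → X}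
    {x y : X} (hc : Tendsto c l (𝓝 x)) (hxy : ¬Inseparable x y) :
    ∀ᶠ k in l, ¬Inseparable (c k) y := by
  rw [← not_frequently]
  exact fun h => hxy <| isClosed_setOfPred_inseparable.mem_of_frequently_of_tendsto
    (f := fun k => (c k, y)) (x := (x, y)) h (hc.prodMk_nhds tendsto_const_nhds)

theorem Filter.Tendsto.eventually_nhds_mem_range_imp_inseparable {c : ℕ → X} {x y : X}
    (hc : Tendsto c atTop (𝓝 x)) (hxy : ¬Inseparable x y) :
    ∀ᶠ z in 𝓝 y, z ∈ range c → Inseparable z y := by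
  obtain ⟨U, hU, V, hV, hUV⟩ :=
    Filter.disjoint_iff.1 (disjoint_nhds_nhds_iff_not_inseparable.2 hxy)
  have hfin : {k | c k ∈ V}.Finite := by
    have hout : ∀ᶠ k in atTop, c k ∉ V :=
      (hc.eventually_mem hU).mono fun k hk => Set.disjoint_left.1 hUV hk
    simpa only [← Nat.cofinite_eq_atTop, eventually_cofinite, not_not] using hout
  have hnear : ∀ k ∈ {k | c k ∈ V}, ∀ᶠ z in 𝓝 y, z = c k → Inseparable z y := by
    intro k _
    by_cases hk : Inseparable (c k) y
    · exact Eventually.of_forall fun z hz => hz ▸ hk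
    · obtain ⟨W, hWo, hyW, hkW⟩ :=
        not_specializes_iff_exists_open.1 (mt Specializes.inseparable hk)
      filter_upwards [hWo.mem_nhds hyW] with z hzW hzk
      exact absurd (hzk ▸ hzW) hkW
  filter_upwards [hV, (eventually_all_finite hfin).2 hnear] with z hzV hz
  rintro ⟨k, rfl⟩
  exact hz k hzV rfl

end R1

theorem exists_tendsto_meetsInfinitelyMany_of_infinite_inseparable {X : Type*}
    [TopologicalSpace X] {x : X} {S : ℕ → ℕ → X}
    (h : {n | ∃ k, Inseparable (S n k) x}.Infinite) :
    ∃ u : ℕ → X, Tendsto u atTop (𝓝 x) ∧ MeetsInfinitelyMany u S := by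
  classical
  let u : ℕ → X := fun n => if hn : ∃ k, Inseparable (S n k) x then S n hn.choose else x
  have hu : ∀ n, Inseparable (u n) x := fun n => by
    by_cases hn : ∃ k, Inseparable (S n k) x
    · simpa only [u, dif_pos hn] using hn.choose_spec
    · simp only [u, dif_neg hn, Inseparable.refl]
  refine ⟨u, tendsto_nhds.2 fun U hU hxU => univ_mem' fun n => (hu n).mem_open_iff hU |>.2 hxU,
    h.mono fun n (hn : ∃ k, _) => ⟨u n, mem_range_self n, ?_⟩⟩
  simp only [u, dif_pos hn]
  exact mem_range_self _

section Group

variable {G : Type*} [Group G] [TopologicalSpace G] [IsTopologicalGroup G]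
  {t : ℕ → G} {S : ℕ → ℕ → G}

theorem one_mem_closure_translates (ht : Tendsto t atTop (𝓝 1))
    (ht1 : ∀ n, ¬Inseparable (t n) 1) (hS : ∀ n, Tendsto (S n) atTop (𝓝 1)) :
    (1 : G) ∈ closure {z | ¬Inseparable z 1 ∧ ∃ n k, z = t n * S n k} := by
  rw [mem_closure_iff]
  intro W hW h1W
  obtain ⟨n, hn⟩ := (ht.eventually_mem (hW.mem_nhds h1W)).exists
  have hcol : Tendsto (fun k => t n * S n k) atTop (𝓝 (t n)) := by
    simpa only [mul_one] using (hS n).const_mul (t n)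
  obtain ⟨k, hkW, hk1⟩ :=
    ((hcol.eventually_mem (hW.mem_nhds hn)).and (hcol.eventually_not_inseparable (ht1 n))).exists
  exact ⟨_, hkW, hk1, n, k, rfl⟩

theorem exists_tendsto_one_meetsInfinitelyMany [FrechetUrysohnSpace G]
    (ht : Tendsto t atTop (𝓝 1)) (ht1 : ∀ n, ¬Inseparable (t n) 1)
    (hS : ∀ n, Tendsto (S n) atTop (𝓝 1)) :
    ∃ u : ℕ → G, Tendsto u atTop (𝓝 1) ∧ MeetsInfinitelyMany u S := by
  obtain ⟨a, ha, ha1⟩ := mem_closure_iff_seq_limit.1 (one_mem_closure_translates ht ht1 hS)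
  choose ha_sep col row ha_eq using ha
  have hcol : Tendsto col atTop cofinite := by
    refine le_cofinite_iff_eventually_ne.2 fun n => show ∀ᶠ j in atTop, col j ≠ n from ?_
    have hsep := ((hS n).const_mul (t n)).eventually_nhds_mem_range_imp_inseparable
      (by simpa only [mul_one] using ht1 n)
    filter_upwards [ha1.eventually hsep] with j hj hjn
    exact ha_sep j (hj ⟨row j, by rw [ha_eq, hjn]⟩)
  rw [Nat.cofinite_eq_atTop] at hcol
  have hu : (fun j => S (col j) (row j)) = fun j => (t (col j))⁻¹ * a j := by
    funext j
    rw [ha_eq, inv_mul_cancel_left]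
  refine ⟨fun j => S (col j) (row j), ?_, ?_⟩
  · rw [hu]
    simpa only [Function.comp_apply, inv_one, one_mul] using ((ht.comp hcol).inv).mul ha1
  · exact (infinite_of_not_bddAbove (not_bddAbove_of_tendsto_atTop hcol)).mono
      (by rintro _ ⟨j, rfl⟩; exact ⟨_, mem_range_self j, mem_range_self _⟩)

end Group

theorem stmt12_general {G : Type*} [Group G] [TopologicalSpace G] [IsTopologicalGroup G]
    [FrechetUrysohnSpace G]
    (S : ℕ → ℕ → G)
    (hconv : ∀ n, Tendsto (S n) atTop (nhds (1 : G))) :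
    ∃ u : ℕ → G, Tendsto u atTop (nhds (1 : G)) ∧
      {n : ℕ | (Set.range u ∩ Set.range (S n)).Nonempty}.Infinite := by
  by_cases h : {n | ∃ k, Inseparable (S n k) 1}.Infinite
  · exact exists_tendsto_meetsInfinitelyMany_of_infinite_inseparable h
  · obtain ⟨m, hm⟩ := (Set.not_infinite.1 h).exists_notMem
    exact exists_tendsto_one_meetsInfinitelyMany (hconv m) (fun k hk => hm ⟨k, hk⟩) hconv

/-- Nyikos: every Fréchet–Urysohn topological group is `α₄` at the identity. -/
theorem stmt12 {G : Type*} [Group G] [TopologicalSpace G] [IsTopologicalGroup G]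
    [FrechetUrysohnSpace G]
    (S : ℕ → ℕ → G) (hinj : ∀ n, Function.Injective (S n))
    (hconv : ∀ n, Tendsto (S n) atTop (nhds (1 : G))) :
    ∃ u : ℕ → G, Tendsto u atTop (nhds (1 : G)) ∧
      {n : ℕ | (Set.range u ∩ Set.range (S n)).Nonempty}.Infinite :=
  stmt12_general S hconv
end

section
/- Let G be a compact Hausdorff topological group and H a dense subgroup. If U is an open subgroup of H, then the closure of U in G is an open subgroup of G, and its trace on H is U. -/
/-!
Write `U = V ∩ H` with `V` open in `G`. Density of `H` gives `V ⊆ closure (V ∩ H) = closure U`,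
so the subgroup `closure U` is a neighbourhood of `1`, hence open. Being an open subgroup of `H`,
`U` is also closed in `H`, i.e. `U = C ∩ H` with `C` closed; then `closure U ⊆ C` and
`closure U ∩ H ⊆ C ∩ H = U`.
-/

section

variable {X : Type*} [TopologicalSpace X] {s t : Set X}

theorem closure_inter_eq_of_isClosed_preimage_val (hst : s ⊆ t)
    (hs : IsClosed (Subtype.val ⁻¹' s : Set t)) : closure s ∩ t = s := by
  obtain ⟨c, hc, hcs⟩ := isClosed_induced_iff.mp hs
  have htc : t ∩ c = t ∩ s := Subtype.preimage_coe_eq_preimage_coe_iff.mp hcs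
  have hsc : s ⊆ c := fun x hx ↦ (htc.symm ▸ ⟨hst hx, hx⟩ : x ∈ t ∩ c).2
  refine subset_antisymm (fun x ⟨hxs, hxt⟩ ↦ ?_) fun x hx ↦ ⟨subset_closure hx, hst hx⟩
  exact (htc ▸ ⟨hxt, hc.closure_subset_iff.mpr hsc hxs⟩ : x ∈ t ∩ s).2

theorem Dense.inter_subset_interior_closure_of_isOpen_preimage_val (ht : Dense t)
    (hs : IsOpen (Subtype.val ⁻¹' s : Set t)) : s ∩ t ⊆ interior (closure s) := by
  obtain ⟨V, hV, hVs⟩ := isOpen_induced_iff.mp hs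
  have hVt : t ∩ V = t ∩ s := Subtype.preimage_coe_eq_preimage_coe_iff.mp hVs
  have hV_sub : V ⊆ closure s := calc
    V ⊆ closure (V ∩ t) := ht.open_subset_closure_inter hV
    _ = closure (s ∩ t) := by rw [Set.inter_comm, hVt, Set.inter_comm]
    _ ⊆ closure s := closure_mono Set.inter_subset_left
  refine fun x ⟨hxs, hxt⟩ ↦ interior_maximal hV_sub hV ?_
  exact (hVt ▸ ⟨hxt, hxs⟩ : x ∈ t ∩ V).2

end

namespace Subgroup

variable {G : Type*} [Group G] [TopologicalSpace G] [IsTopologicalGroup G] {H U : Subgroup G}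

theorem isOpen_topologicalClosure_of_isOpen_preimage_val (hH : Dense (H : Set G))
    (hU : IsOpen (Subtype.val ⁻¹' (U : Set G) : Set (H : Set G))) :
    IsOpen (U.topologicalClosure : Set G) :=
  U.topologicalClosure.isOpen_of_mem_nhds (g := 1) <| mem_interior_iff_mem_nhds.mp <|
    hH.inter_subset_interior_closure_of_isOpen_preimage_val hU ⟨U.one_mem, H.one_mem⟩

theorem coe_topologicalClosure_inter_eq_of_isOpen_preimage_val (hUH : U ≤ H)
    (hU : IsOpen (Subtype.val ⁻¹' (U : Set G) : Set (H : Set G))) :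
    (U.topologicalClosure : Set G) ∩ H = U :=
  closure_inter_eq_of_isClosed_preimage_val hUH ((U.subgroupOf H).isClosed_of_isOpen hU)

end Subgroup

theorem stmt15_general {G : Type*} [Group G] [TopologicalSpace G] [IsTopologicalGroup G]
    (H : Subgroup G) (hdense : Dense (H : Set G))
    (U : Subgroup G) (hUH : U ≤ H)
    (hUopen : IsOpen (Subtype.val ⁻¹' (U : Set G) : Set (H : Set G))) :
    (∃ W : Subgroup G, (W : Set G) = closure (U : Set G)) ∧
      IsOpen (closure (U : Set G)) ∧
      closure (U : Set G) ∩ (H : Set G) = (U : Set G) :=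
  ⟨⟨U.topologicalClosure, rfl⟩,
    Subgroup.isOpen_topologicalClosure_of_isOpen_preimage_val hdense hUopen,
    Subgroup.coe_topologicalClosure_inter_eq_of_isOpen_preimage_val hUH hUopen⟩

/-- In a compact Hausdorff group `G` with dense subgroup `H`, the closure of an open
subgroup `U` of `H` is an open subgroup of `G` whose trace on `H` is `U`. -/
theorem stmt15 {G : Type*} [Group G] [TopologicalSpace G] [IsTopologicalGroup G]
    [CompactSpace G] [T2Space G]
    (H : Subgroup G) (hdense : Dense (H : Set G))
    (U : Subgroup G) (hUH : U ≤ H)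
    (hUopen : IsOpen (Subtype.val ⁻¹' (U : Set G) : Set (H : Set G))) :
    (∃ W : Subgroup G, (W : Set G) = closure (U : Set G)) ∧
      IsOpen (closure (U : Set G)) ∧
      closure (U : Set G) ∩ (H : Set G) = (U : Set G) :=
  stmt15_general H hdense U hUH hUopen
end
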